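/- arXiv:1701.07042 — 4 statements merged into one kernel-verified Lean document; each statement's English description precedes it below -/
import Mathlib

section
/- Every bounded measurable set Ω ⊂ ℝ^d of positive finite measure is admissible for any full lattice Λ ⊂ ℝ^d: there exist a vector v in the dual lattice H of Λ and n ∈ ℕ such that for almost every ω in the fundamental domain D, the numbers ⟨v, λ⟩ for λ ∈ Λ_ω are pairwise distinct modulo n. -/
open MeasureTheory Matrix

noncomputable section

/-- The lattice vector `M z` for an integer vector `z`. -/
def latVec {d : ℕ} (M : Matrix (Fin d) (Fin d) ℝ) (z : Fin d → ℤ) : Fin d → ℝ :=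
  M.mulVec (fun i => (z i : ℝ))

/-- The fundamental domain `M [0,1)^d` of the full lattice `M ℤ^d`. -/
def Dom {d : ℕ} (M : Matrix (Fin d) (Fin d) ℝ) : Set (Fin d → ℝ) :=
  (fun t => M.mulVec t) '' (Set.univ.pi fun _ => Set.Ico (0 : ℝ) 1)

/-- Uniqueness of bounded-digit base-`B` expansions of zero. -/
lemma digits_eq_zero : ∀ (d : ℕ) (B : ℤ), 0 < B → ∀ w : Fin d → ℤ,
    (∀ i, |w i| < B) → (∑ i, w i * B ^ (i : ℕ)) = 0 → ∀ i, w i = 0 := by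
  intro d
  induction d with
  | zero => intro B hB w _ _ i; exact i.elim0
  | succ d ih =>
    intro B hB w hw hsum
    rw [Fin.sum_univ_succ] at hsum
    have hfac : ∀ j : Fin d, w j.succ * B ^ ((j.succ : Fin (d+1)) : ℕ)
        = (w j.succ * B ^ (j : ℕ)) * B := by
      intro j; rw [Fin.val_succ, pow_succ]; ring
    rw [Finset.sum_congr rfl (fun j _ => hfac j), ← Finset.sum_mul] at hsum
    have h0 : w 0 = 0 := by
      have hdvd : B ∣ w 0 := ⟨-∑ j : Fin d, w j.succ * B ^ (j : ℕ), by
        have : w 0 * B ^ ((0 : Fin (d+1)) : ℕ) = w 0 := by simp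
        nlinarith [hsum]⟩
      exact Int.eq_zero_of_abs_lt_dvd hdvd (hw 0)
    have hrest : (∑ j : Fin d, w j.succ * B ^ (j : ℕ)) = 0 := by
      have hB0 : B ≠ 0 := by omega
      have : (∑ j : Fin d, w j.succ * B ^ (j : ℕ)) * B = 0 := by
        have : w 0 * B ^ ((0 : Fin (d+1)) : ℕ) = 0 := by simp [h0]
        linarith [hsum]
      exact (mul_eq_zero.mp this).resolve_right hB0
    have hih := ih B hB (fun j => w j.succ) (fun j => hw j.succ) hrest
    intro i
    refine Fin.cases h0 (fun j => hih j) i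

/-- The key combinatorial lemma: base-`(2N+1)` digit vectors with entries bounded by `N`
are distinguished modulo `(2N+1)^d`. -/
lemma key_lemma (d N : ℕ) (z z' : Fin d → ℤ)
    (hz : ∀ i, |z i| ≤ (N : ℤ)) (hz' : ∀ i, |z' i| ≤ (N : ℤ)) (m : ℤ)
    (h : ∑ i, (z i - z' i) * (2 * (N : ℤ) + 1) ^ (i : ℕ) = (2 * (N : ℤ) + 1) ^ d * m) :
    z = z' := by
  set B : ℤ := 2 * (N : ℤ) + 1 with hB
  have hBpos : 0 < B := by positivity
  have hwlt : ∀ i, |z i - z' i| < B := fun i => by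
    have h1 := hz i; have h2 := hz' i
    have h3 : |z i - z' i| ≤ |z i| + |z' i| := abs_sub (z i) (z' i)
    omega
  -- bound the sum
  have hbound : |∑ i, (z i - z' i) * B ^ (i : ℕ)| ≤ B ^ d - 1 := by
    calc |∑ i, (z i - z' i) * B ^ (i : ℕ)|
        ≤ ∑ i, |(z i - z' i) * B ^ (i : ℕ)| := Finset.abs_sum_le_sum_abs _ _
      _ ≤ ∑ i : Fin d, (B - 1) * B ^ (i : ℕ) := by
          refine Finset.sum_le_sum fun i _ => ?_
          rw [abs_mul, abs_pow, abs_of_pos hBpos]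
          have : |z i - z' i| ≤ B - 1 := by have := hwlt i; omega
          have hpow : (0 : ℤ) ≤ B ^ (i : ℕ) := by positivity
          nlinarith
      _ = B ^ d - 1 := by
          rw [Fin.sum_univ_eq_sum_range (fun i => (B - 1) * B ^ i), ← Finset.mul_sum,
            mul_comm, geom_sum_mul]
  have hm : m = 0 := by
    by_contra hm0
    have h1 : (1 : ℤ) ≤ |m| := Int.one_le_abs hm0
    have hBd : (0 : ℤ) < B ^ d := by positivity
    have h2 : B ^ d ≤ |B ^ d * m| := by
      rw [abs_mul, abs_of_pos hBd]; nlinarith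
    rw [← h] at h2
    linarith [hbound, h2]
  rw [hm, mul_zero] at h
  have hz0 := digits_eq_zero d B hBpos (fun i => z i - z' i) hwlt h
  funext i
  have h4 : z i - z' i = 0 := hz0 i
  omega

/-- Every bounded measurable set `Ω ⊂ ℝ^d` of positive finite measure is admissible for any
full lattice `Λ = M ℤ^d`: there exist a vector `v` in the dual lattice `H` (i.e. `⟨v, λ⟩ ∈ ℤ`
for every lattice point `λ`) and `n ∈ ℕ`, `n > 0`, such that for a.e. `ω` in the fundamental
domain, the numbers `⟨v, λ⟩` for `λ ∈ Λ_ω` are pairwise distinct modulo `n`. -/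
theorem bounded_implies_admissible (d : ℕ) (M : Matrix (Fin d) (Fin d) ℝ) (hM : IsUnit M.det)
    (Ω : Set (Fin d → ℝ)) (hmeas : MeasurableSet Ω) (hbdd : Bornology.IsBounded Ω)
    (hpos : 0 < volume Ω) (hfin : volume Ω < ⊤) :
    ∃ v : Fin d → ℝ, (∀ z : Fin d → ℤ, ∃ m : ℤ, v ⬝ᵥ latVec M z = (m : ℝ)) ∧
      ∃ n : ℕ, 0 < n ∧
        ∀ᵐ ω ∂(volume.restrict (Dom M)),
          ∀ z z' : Fin d → ℤ, ω + latVec M z ∈ Ω → ω + latVec M z' ∈ Ω →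
            (∃ m : ℤ, v ⬝ᵥ latVec M z - v ⬝ᵥ latVec M z' = (n : ℝ) * m) → z = z' := by
  -- bound Ω
  obtain ⟨R, hR⟩ := isBounded_iff_forall_norm_le.mp hbdd
  -- continuous linear maps
  set F : (Fin d → ℝ) →L[ℝ] (Fin d → ℝ) := LinearMap.toContinuousLinearMap (M⁻¹).mulVecLin
  set G : (Fin d → ℝ) →L[ℝ] (Fin d → ℝ) := LinearMap.toContinuousLinearMap M.mulVecLin
  set C : ℝ := ‖F‖ * (|R| + ‖G‖) with hC
  set N : ℕ := ⌈C⌉₊ with hN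
  -- the bound on lattice points hitting Ω from the fundamental domain
  have hbox : ∀ ω ∈ Dom M, ∀ z : Fin d → ℤ, ω + latVec M z ∈ Ω → ∀ i, |z i| ≤ (N : ℤ) := by
    intro ω hω z hzΩ i
    obtain ⟨t, ht, rfl⟩ := hω
    have htn : ‖t‖ ≤ 1 := by
      rw [pi_norm_le_iff_of_nonneg zero_le_one]
      intro i
      have := ht i (Set.mem_univ i)
      rw [Real.norm_eq_abs, abs_le]
      constructor <;> [linarith [this.1]; linarith [this.2]]
    have hωn : ‖M.mulVec t‖ ≤ ‖G‖ := by
      calc ‖M.mulVec t‖ = ‖G t‖ := rfl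
        _ ≤ ‖G‖ * ‖t‖ := G.le_opNorm t
        _ ≤ ‖G‖ * 1 := by have := norm_nonneg G; nlinarith
        _ = ‖G‖ := mul_one _
    have hlat : ‖latVec M z‖ ≤ |R| + ‖G‖ := by
      have h1 : ‖M.mulVec t + latVec M z‖ ≤ R := hR _ hzΩ
      have h2 : R ≤ |R| := le_abs_self R
      calc ‖latVec M z‖ = ‖(M.mulVec t + latVec M z) - M.mulVec t‖ := by ring_nf
        _ ≤ ‖M.mulVec t + latVec M z‖ + ‖M.mulVec t‖ := norm_sub_le _ _
        _ ≤ |R| + ‖G‖ := by linarith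
    have hzr : (fun i => (z i : ℝ)) = F (latVec M z) := by
      show _ = (M⁻¹).mulVec (M.mulVec fun i => (z i : ℝ))
      rw [Matrix.mulVec_mulVec, Matrix.nonsing_inv_mul M hM, Matrix.one_mulVec]
    have hzn : ‖(fun i => (z i : ℝ))‖ ≤ C := by
      rw [hzr]
      calc ‖F (latVec M z)‖ ≤ ‖F‖ * ‖latVec M z‖ := F.le_opNorm _
        _ ≤ C := by have := norm_nonneg F; rw [hC]; nlinarith
    have : |(z i : ℝ)| ≤ (N : ℝ) := by
      have h1 := norm_le_pi_norm (fun j => ((z j : ℝ))) i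
      have h2 : C ≤ (N : ℝ) := Nat.le_ceil C
      rw [Real.norm_eq_abs] at h1
      exact le_trans h1 (le_trans hzn h2)
    exact_mod_cast (by rwa [← Int.cast_abs] at this : ((|z i| : ℤ) : ℝ) ≤ (N : ℝ))
  -- build v
  set B : ℤ := 2 * (N : ℤ) + 1 with hBdef
  set c : Fin d → ℤ := fun i => B ^ (i : ℕ) with hc
  set v : Fin d → ℝ := Matrix.vecMul (fun i => (c i : ℝ)) M⁻¹ with hv
  have hvz : ∀ z : Fin d → ℤ, v ⬝ᵥ latVec M z = ((∑ i, c i * z i : ℤ) : ℝ) := by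
    intro z
    rw [latVec, hv, Matrix.dotProduct_mulVec, Matrix.vecMul_vecMul,
      Matrix.nonsing_inv_mul M hM, Matrix.vecMul_one]
    push_cast
    rfl
  refine ⟨v, fun z => ⟨∑ i, c i * z i, hvz z⟩, (2 * N + 1) ^ d, by positivity, ?_⟩
  -- measurability of Dom M
  have hDomEq : Dom M = (fun x => (M⁻¹).mulVec x) ⁻¹' (Set.univ.pi fun _ => Set.Ico (0 : ℝ) 1) := by
    ext x
    simp only [Dom, Set.mem_image, Set.mem_preimage]
    constructor
    · rintro ⟨t, ht, rfl⟩
      rwa [Matrix.mulVec_mulVec, Matrix.nonsing_inv_mul M hM, Matrix.one_mulVec]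
    · intro hx
      exact ⟨M⁻¹.mulVec x, hx, by
        rw [Matrix.mulVec_mulVec, Matrix.mul_nonsing_inv M hM, Matrix.one_mulVec]⟩
  have hDomMeas : MeasurableSet (Dom M) := by
    rw [hDomEq]
    exact (F.continuous.measurable) (MeasurableSet.univ_pi fun _ => measurableSet_Ico)
  filter_upwards [ae_restrict_mem hDomMeas] with ω hω
  intro z z' hzΩ hz'Ω ⟨m, hm⟩
  rw [hvz z, hvz z'] at hm
  have hmz : (∑ i, c i * z i) - (∑ i, c i * z' i) = ((2 * N + 1 : ℕ) ^ d : ℤ) * m := by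
    exact_mod_cast hm
  refine key_lemma d N z z' (hbox ω hω z hzΩ) (hbox ω hω z' hz'Ω) m ?_
  rw [← Finset.sum_sub_distrib] at hmz
  simp only [hc, hBdef] at hmz
  push_cast at hmz
  rw [← hmz]
  exact Finset.sum_congr rfl fun i _ => by ring
end
end

section
/- Let I_j = [(2^j - 2)/2^j, (2^j - 1)/2^j) for j ≥ 1 and let Ω = [0,1) ∪ ⋃_{j≥1} (I_j + j). Then Ω multi-tiles ℝ at level 2 by translations on ℤ, i.e., for almost every ω ∈ [0,1), ∑_{n∈ℤ} χ_Ω(ω + n) = 2. -/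
open MeasureTheory

noncomputable section

def Iset (j : ℕ) : Set ℝ := Set.Ico ((2 ^ j - 2) / 2 ^ j) ((2 ^ j - 1) / 2 ^ j)

def Omeg : Set ℝ :=
  Set.Ico (0 : ℝ) 1 ∪ ⋃ j ∈ Set.Ici (1 : ℕ), (fun x => x + (j : ℝ)) '' Iset j

lemma Iset_eq (j : ℕ) :
    Iset j = Set.Ico (1 - 2 * (1/2 : ℝ) ^ j) (1 - (1/2 : ℝ) ^ j) := by
  have h : (2 : ℝ) ^ j ≠ 0 := by positivity
  unfold Iset
  rw [show ((2:ℝ)^j - 2)/2^j = 1 - 2 * (1/2:ℝ)^j by rw [div_pow, one_pow, sub_div, mul_one_div, div_self h],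
      show ((2:ℝ)^j - 1)/2^j = 1 - (1/2:ℝ)^j by rw [div_pow, one_pow, sub_div, div_self h]]

lemma mem_Omeg_iff (x : ℝ) :
    x ∈ Omeg ↔ x ∈ Set.Ico (0:ℝ) 1 ∨ ∃ j : ℕ, 1 ≤ j ∧ ∃ y ∈ Iset j, y + (j:ℝ) = x := by
  constructor
  · rintro (h | h)
    · exact Or.inl h
    · simp only [Set.mem_iUnion, Set.mem_image, Set.mem_Ici] at h
      obtain ⟨j, hj, y, hy, hxy⟩ := h
      exact Or.inr ⟨j, hj, y, hy, hxy⟩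
  · rintro (h | ⟨j, hj, y, hy, hxy⟩)
    · exact Or.inl h
    · exact Or.inr (Set.mem_iUnion₂.mpr ⟨j, hj, y, hy, hxy⟩)

lemma Iset_mem_Ico {j : ℕ} (hj : 1 ≤ j) {y : ℝ} (hy : y ∈ Iset j) :
    0 ≤ y ∧ y < 1 := by
  rw [Iset_eq] at hy
  have h1 : (1/2 : ℝ) ^ j ≤ (1/2 : ℝ) ^ 1 :=
    pow_le_pow_of_le_one (by norm_num) (by norm_num) hj
  have h2 : (0:ℝ) < (1/2 : ℝ) ^ j := by positivity
  constructor <;> [nlinarith [hy.1]; nlinarith [hy.2]]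

/-- `Ω = [0,1) ∪ ⋃_{j≥1} (I_j + j)` multi-tiles `ℝ` at level `2` by translations on `ℤ`:
for a.e. `ω ∈ [0,1)`, `∑_{n ∈ ℤ} χ_Ω(ω + n) = 2`. -/
theorem Omeg_two_tiles :
    ∀ᵐ ω ∂(volume.restrict (Set.Ico (0 : ℝ) 1)),
      (∑' n : ℤ, Omeg.indicator (fun _ => (1 : ℝ)) (ω + n)) = 2 := by
  filter_upwards [ae_restrict_mem measurableSet_Ico] with ω hω
  obtain ⟨hω0, hω1⟩ := hω
  have hex : ∃ n : ℕ, (1/2 : ℝ) ^ n < 1 - ω :=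
    exists_pow_lt_of_lt_one (by linarith) (by norm_num)
  set j := Nat.find hex with hjdef
  have hspec : (1/2 : ℝ) ^ j < 1 - ω := Nat.find_spec hex
  have hj1 : 1 ≤ j := by
    rcases Nat.eq_zero_or_pos j with h | h
    · exfalso; rw [h] at hspec; simp at hspec; linarith
    · exact h
  obtain ⟨k, hk⟩ : ∃ k, j = k + 1 := ⟨j - 1, (Nat.succ_pred_eq_of_pos hj1).symm⟩
  have hmin : ¬ ((1/2 : ℝ) ^ k < 1 - ω) := Nat.find_min hex (by omega)
  push_neg at hmin
  have hωI : ω ∈ Iset j := by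
    rw [Iset_eq]
    constructor
    · have : 2 * (1/2 : ℝ) ^ j = (1/2 : ℝ) ^ k := by
        rw [hk, pow_succ]; ring
      rw [this]; linarith
    · linarith
  -- the support of the function is {0, j}
  have key : ∀ n : ℤ, n ∉ ({0, (j:ℤ)} : Finset ℤ) →
      Omeg.indicator (fun _ => (1 : ℝ)) (ω + n) = 0 := by
    intro n hn
    simp only [Finset.mem_insert, Finset.mem_singleton, not_or] at hn
    apply Set.indicator_of_notMem
    rw [mem_Omeg_iff]
    push_neg
    rcases lt_trichotomy n 0 with hneg | hzero | hpos
    · have hcast : (n : ℝ) ≤ -1 := by exact_mod_cast (by omega : n ≤ -1)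
      constructor
      · intro h; exact absurd h.1 (by push_neg; linarith)
      · intro m hm y hy
        have := Iset_mem_Ico hm hy
        have hm1 : (1:ℝ) ≤ m := by exact_mod_cast hm
        intro heq
        have : ω + (n:ℝ) < 0 := by linarith
        linarith [this, heq ▸ (by linarith : (0:ℝ) ≤ y + m)]
    · exact absurd hzero hn.1
    · -- n ≥ 1, n ≠ j
      obtain ⟨m, rfl⟩ : ∃ m : ℕ, n = (m : ℤ) := ⟨n.toNat, (Int.toNat_of_nonneg hpos.le).symm⟩
      have hm1 : 1 ≤ m := by exact_mod_cast hpos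
      have hmj : m ≠ j := by intro h; exact hn.2 (by exact_mod_cast h)
      have hmr : (1:ℝ) ≤ ((m:ℤ) : ℝ) := by exact_mod_cast hm1
      constructor
      · intro h; exact absurd h.2 (by push_neg; linarith)
      · intro l hl y hy heq
        have hyI := Iset_mem_Ico hl hy
        push_cast at heq
        have hlr : (0:ℝ) ≤ l := Nat.cast_nonneg l
        have hlm : l = m := by
          have h1 : l < m + 1 := by exact_mod_cast (show (l:ℝ) < m + 1 by linarith)
          have h2 : m < l + 1 := by exact_mod_cast (show (m:ℝ) < l + 1 by linarith)
          omega
        subst hlm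
        have hyω : y = ω := by linarith
        rw [hyω] at hy
        -- y = ω ∈ Iset l with l ≠ j : contradiction with minimality / hspec
        rw [Iset_eq] at hy
        rcases lt_or_gt_of_ne hmj with hlt | hgt
        · -- l < j, so l ≤ k, ¬ (1/2)^l < 1-ω by Nat.find_min, but hy.2 gives it
          have := Nat.find_min hex (show l < j by omega)
          push_neg at this
          have : (1/2:ℝ)^l < 1 - ω := by linarith [hy.2]
          linarith [Nat.find_min hex (show l < j by omega), this]
        · -- l > j : 2*(1/2)^l ≤ (1/2)^j < 1-ω but hy.1 gives 1-ω ≤ 2*(1/2)^l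
          have h2l : 2 * (1/2:ℝ)^l ≤ (1/2:ℝ)^j := by
            have : (1/2:ℝ)^l ≤ (1/2:ℝ)^(j+1) :=
              pow_le_pow_of_le_one (by norm_num) (by norm_num) (by omega)
            rw [pow_succ] at this; linarith
          linarith [hy.1]
  rw [tsum_eq_sum key]
  have h0j : (0 : ℤ) ≠ (j : ℤ) := by exact_mod_cast (by omega : 0 ≠ j)
  rw [Finset.sum_pair h0j]
  have f0 : Omeg.indicator (fun _ => (1:ℝ)) (ω + (0:ℤ)) = 1 := by
    apply Set.indicator_of_mem
    rw [mem_Omeg_iff]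
    left; simp only [Int.cast_zero, add_zero]; exact ⟨hω0, hω1⟩
  have fj : Omeg.indicator (fun _ => (1:ℝ)) (ω + ((j:ℤ):ℝ)) = 1 := by
    apply Set.indicator_of_mem
    rw [mem_Omeg_iff]
    right; exact ⟨j, hj1, ω, hωI, by push_cast; ring⟩
  rw [f0, fj]; norm_num
end
end

section
/- Let I_j = [(2^j - 2)/2^j, (2^j - 1)/2^j) for j ≥ 1 and Ω = [0,1) ∪ ⋃_{j≥1} (I_j + j). Then Ω is not admissible for ℤ: for every n ∈ ℕ there is a positive measure set of ω ∈ [0,1) (namely ω ∈ I_n) such that the elements of Λ_ω = {0, n} are not distinct modulo n. -/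
open MeasureTheory

noncomputable section

lemma two_le_pow {n : ℕ} (hn : 1 ≤ n) : (2:ℝ) ≤ 2 ^ n := by
  calc (2:ℝ) = 2 ^ 1 := by ring
  _ ≤ 2 ^ n := pow_le_pow_right₀ one_le_two hn

lemma pow_pos' (n : ℕ) : (0:ℝ) < 2 ^ n := by positivity

lemma Iset_subset {n : ℕ} (hn : 1 ≤ n) : Iset n ⊆ Set.Ico (0:ℝ) 1 := by
  intro x hx
  obtain ⟨h1, h2⟩ := hx
  have hp := pow_pos' n
  constructor
  · have : (0:ℝ) ≤ (2 ^ n - 2) / 2 ^ n := by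
      apply div_nonneg _ hp.le
      linarith [two_le_pow hn]
    linarith
  · have : ((2:ℝ) ^ n - 1) / 2 ^ n ≤ 1 := by
      rw [div_le_one hp]; linarith
    linarith

lemma Iset_disjoint {j n : ℕ} (hj : 1 ≤ j) (hn : 1 ≤ n) {ω : ℝ}
    (h1 : ω ∈ Iset j) (h2 : ω ∈ Iset n) : j = n := by
  by_contra hne
  wlog hlt : j < n generalizing j n
  · exact this hn hj h2 h1 (Ne.symm hne) (by omega)
  obtain ⟨ha, hb⟩ := h1
  obtain ⟨hc, hd⟩ := h2
  have hpj := pow_pos' j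
  have hpn := pow_pos' n
  have key : (2:ℝ) * 2 ^ j ≤ 2 ^ n := by
    calc (2:ℝ) * 2 ^ j = 2 ^ (j+1) := by ring
    _ ≤ 2 ^ n := pow_le_pow_right₀ one_le_two (by omega)
  have e1 : ω < 1 - 1 / 2 ^ j := by
    have h : ((2:ℝ) ^ j - 1) / 2 ^ j = 1 - 1 / 2 ^ j := by field_simp
    linarith [h ▸ hb]
  have e2 : 1 - 2 / 2 ^ n ≤ ω := by
    have h : ((2:ℝ) ^ n - 2) / 2 ^ n = 1 - 2 / 2 ^ n := by field_simp
    linarith [h ▸ hc]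
  have e3 : (2:ℝ) / 2 ^ n ≤ 1 / 2 ^ j := by
    rw [div_le_div_iff₀ hpn hpj]
    linarith
  linarith

/-- `Ω = [0,1) ∪ ⋃_{j≥1} (I_j + j)` is not admissible for `ℤ`: for every `n ≥ 1` the set
`I_n` has positive measure and for `ω ∈ I_n` one has `Λ_ω = {0, n}`, whose elements are not
distinct modulo `n`; consequently there is no `n ∈ ℕ` for which for a.e. `ω ∈ [0,1)` the
elements of `Λ_ω = {m ∈ ℤ : ω + m ∈ Ω}` are pairwise distinct modulo `n`. -/
theorem Omeg_not_admissible :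
    (∀ n : ℕ, 1 ≤ n → 0 < volume (Iset n) ∧
      ∀ ω ∈ Iset n, {m : ℤ | ω + (m : ℝ) ∈ Omeg} = {0, (n : ℤ)}) ∧
    ¬ ∃ n : ℕ, 0 < n ∧
        ∀ᵐ ω ∂(volume.restrict (Set.Ico (0 : ℝ) 1)),
          ∀ a b : ℤ, ω + (a : ℝ) ∈ Omeg → ω + (b : ℝ) ∈ Omeg → a ≡ b [ZMOD (n : ℤ)] → a = b := by
  have main : ∀ n : ℕ, 1 ≤ n → 0 < volume (Iset n) ∧
      ∀ ω ∈ Iset n, {m : ℤ | ω + (m : ℝ) ∈ Omeg} = {0, (n : ℤ)} := by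
    intro n hn
    have hp := pow_pos' n
    constructor
    · rw [Iset, Real.volume_Ico]
      have hlt : ((2:ℝ) ^ n - 2) / 2 ^ n < (2 ^ n - 1) / 2 ^ n := by
        apply div_lt_div_of_pos_right (by linarith) hp
      simp [ENNReal.ofReal_pos, sub_pos, hlt]
    · intro ω hω
      have hω01 := Iset_subset hn hω
      have hω0 := hω01.1
      have hω1 := hω01.2
      ext m
      simp only [Set.mem_setOf_eq, Set.mem_insert_iff, Set.mem_singleton_iff]
      constructor
      · intro hm
        rcases hm with h | h
        · left
          obtain ⟨h0, h1⟩ := h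
          have hm1 : (-1:ℝ) < (m:ℝ) := by linarith
          have hm2 : (m:ℝ) < 1 := by linarith
          have hm1' : (-1:ℤ) < m := by exact_mod_cast hm1
          have hm2' : m < 1 := by exact_mod_cast hm2
          omega
        · right
          simp only [Set.mem_iUnion, Set.mem_image] at h
          obtain ⟨j, hj, x, hx, hxe⟩ := h
          have hj1 : 1 ≤ j := hj
          have hx01 := Iset_subset hj1 hx
          have hxeq : x = ω + m - j := by linarith
          have hmj : m = j := by
            have h1 := hx01.1; have h2 := hx01.2
            rw [hxeq] at h1 h2
            have hd1 : (-1:ℝ) < (m:ℝ) - j := by linarith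
            have hd2 : ((m:ℝ) - j) < 1 := by linarith
            have hd1' : (-1:ℤ) < m - j := by exact_mod_cast hd1
            have hd2' : m - (j:ℤ) < 1 := by exact_mod_cast hd2
            omega
          have : x = ω := by rw [hxeq, hmj]; push_cast; ring
          rw [this] at hx
          have := Iset_disjoint hj1 hn hx hω
          rw [hmj, this]
      · intro hm
        rcases hm with rfl | rfl
        · left; simpa using hω01
        · right
          simp only [Set.mem_iUnion, Set.mem_image]
          exact ⟨n, hn, ω, hω, by push_cast; ring⟩
  refine ⟨main, ?_⟩
  rintro ⟨n, hn, hae⟩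
  obtain ⟨hvol, hΛ⟩ := main n hn
  set P : ℝ → Prop := fun ω =>
    ∀ a b : ℤ, ω + (a : ℝ) ∈ Omeg → ω + (b : ℝ) ∈ Omeg → a ≡ b [ZMOD (n : ℤ)] → a = b with hP
  have hsub : Iset n ⊆ {ω | ¬ P ω} := by
    intro ω hω
    have hΛω := hΛ ω hω
    intro hPω
    have h0 : ω + ((0:ℤ):ℝ) ∈ Omeg := by
      have : (0:ℤ) ∈ {m : ℤ | ω + (m : ℝ) ∈ Omeg} := by rw [hΛω]; left; rfl
      exact this
    have hn' : ω + ((n:ℤ):ℝ) ∈ Omeg := by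
      have : (n:ℤ) ∈ {m : ℤ | ω + (m : ℝ) ∈ Omeg} := by rw [hΛω]; right; rfl
      exact this
    have hmod : (0:ℤ) ≡ (n:ℤ) [ZMOD (n:ℤ)] := by
      simp [Int.ModEq]
    have := hPω 0 n h0 hn' hmod
    omega
  have h0 : (volume.restrict (Set.Ico (0:ℝ) 1)) {ω | ¬ P ω} = 0 := ae_iff.mp hae
  have hle : (volume.restrict (Set.Ico (0:ℝ) 1)) (Iset n) ≤ 0 := by
    rw [← h0]
    exact measure_mono hsub
  have heq : (volume.restrict (Set.Ico (0:ℝ) 1)) (Iset n) = volume (Iset n) := by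
    have hms : MeasurableSet (Iset n) := measurableSet_Ico
    rw [Measure.restrict_apply hms]
    congr 1
    exact Set.inter_eq_left.mpr (Iset_subset hn)
  rw [heq] at hle
  exact absurd (le_antisymm hle zero_le) hvol.ne'
end
end

section
/- Let Ω ⊂ ℝ^d be measurable of finite measure, k-subtiling ℝ^d and (n,v)-admissible for a full lattice Λ with fundamental domain D. Let ℛ = {R ⊂ Λ : #R ≤ k and λ - λ' ∉ Λ⁽⁰⁾ for distinct λ,λ' ∈ R}, where Λ⁽⁰⁾ = {λ : ⟨v,λ⟩ ≡ 0 mod n}, and for each R ∈ ℛ let D_R = {ω ∈ D : Λ_ω = R}. Then each D_R is measurable, the D_R are pairwise disjoint, and up to a set of measure zero, Ω = ⋃_{R∈ℛ} (D_R + R). -/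
open MeasureTheory Matrix

noncomputable section

/-- The family `ℛ` of finite subsets `R ⊂ Λ` (parametrized by integer vectors) with at most
`k` elements such that `λ - λ' ∉ Λ⁽⁰⁾` for distinct `λ, λ' ∈ R`, i.e. the values `⟨v,λ⟩`
are pairwise distinct mod `n`. -/
def calR {d : ℕ} (M : Matrix (Fin d) (Fin d) ℝ) (v : Fin d → ℝ) (n k : ℕ) :
    Set (Finset (Fin d → ℤ)) :=
  {R | R.card ≤ k ∧ ∀ z ∈ R, ∀ z' ∈ R, z ≠ z' →
    ¬ ∃ m : ℤ, v ⬝ᵥ latVec M z - v ⬝ᵥ latVec M z' = (n : ℝ) * m}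

/-- The piece `D_R = {ω ∈ D : Λ_ω = R}` of the fundamental domain. -/
def DR {d : ℕ} (M : Matrix (Fin d) (Fin d) ℝ) (Ω : Set (Fin d → ℝ))
    (R : Finset (Fin d → ℤ)) : Set (Fin d → ℝ) :=
  {ω ∈ Dom M | {z : Fin d → ℤ | ω + latVec M z ∈ Ω} = (R : Set (Fin d → ℤ))}

/-- For `Ω` a `k`-subtile, `(n,v)`-admissible for `Λ = M ℤ^d`: each `D_R` is measurable,
the `D_R` are pairwise disjoint, and up to measure zero
`Ω = ⋃_{R ∈ ℛ} (D_R + R)`. -/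
theorem subtile_decomposition (d k n : ℕ) (hk : 0 < k) (hn : 0 < n)
    (M : Matrix (Fin d) (Fin d) ℝ) (hM : IsUnit M.det)
    (Ω : Set (Fin d → ℝ)) (hmeas : MeasurableSet Ω) (hfin : volume Ω < ⊤)
    (v : Fin d → ℝ) (hv : ∀ z : Fin d → ℤ, ∃ m : ℤ, v ⬝ᵥ latVec M z = (m : ℝ))
    (hsub : ∀ᵐ ω ∂(volume.restrict (Dom M)),
      {z : Fin d → ℤ | ω + latVec M z ∈ Ω}.encard ≤ (k : ℕ∞))
    (hadm : ∀ᵐ ω ∂(volume.restrict (Dom M)),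
      ∀ z z' : Fin d → ℤ, ω + latVec M z ∈ Ω → ω + latVec M z' ∈ Ω →
        (∃ m : ℤ, v ⬝ᵥ latVec M z - v ⬝ᵥ latVec M z' = (n : ℝ) * m) → z = z') :
    (∀ R : Finset (Fin d → ℤ), MeasurableSet (DR M Ω R)) ∧
    (∀ R R' : Finset (Fin d → ℤ), R ≠ R' → Disjoint (DR M Ω R) (DR M Ω R')) ∧
    volume (symmDiff Ω (⋃ R ∈ calR M v n k, ⋃ z ∈ R, (fun ω => ω + latVec M z) '' DR M Ω R))
      = 0 := by
  classical
  have hcont : Continuous fun t : Fin d → ℝ => (M⁻¹).mulVec t :=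
    (Matrix.mulVecLin (M⁻¹)).continuous_of_finiteDimensional
  -- Dom M as a preimage
  have hDom_eq : Dom M = (fun x => (M⁻¹).mulVec x) ⁻¹' (Set.univ.pi fun _ => Set.Ico (0 : ℝ) 1) := by
    ext x
    constructor
    · rintro ⟨t, ht, rfl⟩
      simpa [Matrix.mulVec_mulVec, Matrix.nonsing_inv_mul M hM] using ht
    · intro hx
      exact ⟨(M⁻¹).mulVec x, hx, by
        simp [Matrix.mulVec_mulVec, Matrix.mul_nonsing_inv M hM]⟩
  have hDomMeas : MeasurableSet (Dom M) := by
    rw [hDom_eq]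
    exact (MeasurableSet.univ_pi fun _ => measurableSet_Ico).preimage hcont.measurable
  -- measurability of the DR pieces
  have hT : ∀ z : Fin d → ℤ, MeasurableSet {ω : Fin d → ℝ | ω + latVec M z ∈ Ω} :=
    fun z => (measurable_add_const (latVec M z)) hmeas
  have hDRmeas : ∀ R : Finset (Fin d → ℤ), MeasurableSet (DR M Ω R) := by
    intro R
    have hEq : DR M Ω R =
        Dom M ∩ ⋂ z : Fin d → ℤ, {ω | ω + latVec M z ∈ Ω ↔ z ∈ R} := by
      ext ω
      simp only [DR, Set.mem_setOf_eq, Set.mem_inter_iff, Set.mem_iInter, Set.ext_iff,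
        Finset.mem_coe]
    rw [hEq]
    refine hDomMeas.inter (MeasurableSet.iInter fun z => ?_)
    by_cases hz : z ∈ R
    · simpa [hz] using hT z
    · have hc : {ω : Fin d → ℝ | ω + latVec M z ∈ Ω ↔ z ∈ R} = {ω | ω + latVec M z ∈ Ω}ᶜ := by
        ext ω; simp [hz]
      rw [hc]; exact (hT z).compl
  refine ⟨hDRmeas, ?_, ?_⟩
  · intro R R' hne
    rw [Set.disjoint_left]
    intro ω hω hω'
    exact hne (Finset.coe_injective (hω.2.symm.trans hω'.2))
  -- main part
  set U := ⋃ R ∈ calR M v n k, ⋃ z ∈ R, (fun ω => ω + latVec M z) '' DR M Ω R with hU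
  have hUsub : U ⊆ Ω := by
    intro x hx
    simp only [U, Set.mem_iUnion, Set.mem_image] at hx
    obtain ⟨R, hR, z, hz, ω, hω, rfl⟩ := hx
    have h2 := hω.2
    have : z ∈ {z : Fin d → ℤ | ω + latVec M z ∈ Ω} := by
      rw [h2]; exact hz
    exact this
  -- the null set of bad points in the fundamental domain
  have hae := hsub.and hadm
  rw [Filter.eventually_iff, mem_ae_iff] at hae
  set N := {ω : Fin d → ℝ | ¬ ({z : Fin d → ℤ | ω + latVec M z ∈ Ω}.encard ≤ (k : ℕ∞) ∧
      ∀ z z' : Fin d → ℤ, ω + latVec M z ∈ Ω → ω + latVec M z' ∈ Ω →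
        (∃ m : ℤ, v ⬝ᵥ latVec M z - v ⬝ᵥ latVec M z' = (n : ℝ) * m) → z = z')} ∩ Dom M with hNdef
  have hNnull : volume N = 0 := by
    rw [hNdef, ← Measure.restrict_apply' hDomMeas, ← Set.compl_setOf]
    exact hae
  -- every point of Ω not covered by U lies in a translate of N
  have key : Ω \ U ⊆ ⋃ z : Fin d → ℤ, (fun ω => ω + latVec M z) '' N := by
    rintro x ⟨hxΩ, hxU⟩
    set u := (M⁻¹).mulVec x with hu
    set z₀ : Fin d → ℤ := fun i => ⌊u i⌋ with hz₀
    set ω := x - latVec M z₀ with hω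
    have hxω : ω + latVec M z₀ = x := by simp [hω]
    have hω_dom : ω ∈ Dom M := by
      refine ⟨u - fun i => ((z₀ i : ℝ)), fun i _ => ?_, ?_⟩
      · have h1 := Int.floor_le (u i)
        have h2 := Int.lt_floor_add_one (u i)
        simp only [Pi.sub_apply, Set.mem_Ico]
        constructor <;> [linarith; linarith]
      · have hMu : M.mulVec u = x := by
          rw [hu, Matrix.mulVec_mulVec, Matrix.mul_nonsing_inv M hM, Matrix.one_mulVec]
        show M.mulVec (u - fun i => ((z₀ i : ℝ))) = ω
        rw [Matrix.mulVec_sub, hMu, hω]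
        rfl
    by_cases hωN : ω ∈ N
    · exact Set.mem_iUnion.2 ⟨z₀, ω, hωN, hxω⟩
    · exfalso
      have hP : ({z : Fin d → ℤ | ω + latVec M z ∈ Ω}.encard ≤ (k : ℕ∞) ∧
          ∀ z z' : Fin d → ℤ, ω + latVec M z ∈ Ω → ω + latVec M z' ∈ Ω →
            (∃ m : ℤ, v ⬝ᵥ latVec M z - v ⬝ᵥ latVec M z' = (n : ℝ) * m) → z = z') := by
        by_contra hc
        exact hωN ⟨hc, hω_dom⟩
      obtain ⟨hcard, hdist⟩ := hP
      have hSfin : {z : Fin d → ℤ | ω + latVec M z ∈ Ω}.Finite :=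
        Set.finite_of_encard_le_coe hcard
      set R := hSfin.toFinset with hR
      have hcoe : (R : Set (Fin d → ℤ)) = {z : Fin d → ℤ | ω + latVec M z ∈ Ω} :=
        hSfin.coe_toFinset
      have hRmem : ∀ z : Fin d → ℤ, z ∈ R ↔ ω + latVec M z ∈ Ω := by
        intro z
        rw [← Finset.mem_coe, hcoe]; rfl
      have hRcal : R ∈ calR M v n k := by
        constructor
        · have : ((R.card : ℕ∞)) ≤ (k : ℕ∞) := by
            rw [← hSfin.encard_eq_coe_toFinset_card]
            exact hcard
          exact_mod_cast this
        · intro z hz z' hz' hne hm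
          exact hne (hdist z z' ((hRmem z).1 hz) ((hRmem z').1 hz') hm)
      have hωDR : ω ∈ DR M Ω R := ⟨hω_dom, by rw [hcoe]⟩
      have hz₀R : z₀ ∈ R := (hRmem z₀).2 (by rw [hxω]; exact hxΩ)
      apply hxU
      simp only [U, Set.mem_iUnion, Set.mem_image]
      exact ⟨R, hRcal, z₀, hz₀R, ω, hωDR, hxω⟩
  have hnull : volume (Ω \ U) = 0 := by
    refine measure_mono_null key (measure_iUnion_null fun z => ?_)
    have himg : (fun ω => ω + latVec M z) '' N = (fun x => x + (-(latVec M z))) ⁻¹' N := by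
      ext x
      simp only [Set.mem_image, Set.mem_preimage]
      constructor
      · rintro ⟨ω, hω, rfl⟩; simpa using hω
      · intro hx; exact ⟨x + (-(latVec M z)), hx, by abel⟩
    rw [himg, measure_preimage_add_right]
    exact hNnull
  have hdiff : U \ Ω = ∅ := Set.diff_eq_empty.2 hUsub
  rw [Set.symmDiff_def]
  refine le_antisymm ?_ zero_le
  calc volume ((Ω \ U) ∪ (U \ Ω)) ≤ volume (Ω \ U) + volume (U \ Ω) := measure_union_le _ _
    _ = 0 := by rw [hnull, hdiff]; simp
end
end
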